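/- Tanking cannot improve rank-based counts among qualified teams: if team t tanks (so {r : r ≻ t} ⊆ {r : r ≻′ t}) and t ∈ Q ∩ Q′, then |{s ∈ Q′ : s ≻′ t}| ≥ |{s ∈ Q : s ≻ t}|. -/
import Mathlib

section helpers
variable {T : Type*} [Fintype T] {rel : T → T → Prop} [IsStrictTotalOrder T rel]

lemma rank_lt_of_rel {s t : T} (h : rel s t) :
    {r | rel r s}.ncard < {r | rel r t}.ncard := by
  apply Set.ncard_lt_ncard _ (Set.toFinite _)
  constructor
  · intro r hr
    exact _root_.trans hr h
  · intro hsub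
    exact irrefl_of rel s (hsub h)

lemma rel_of_rank_lt {s t : T} (h : {r | rel r s}.ncard < {r | rel r t}.ncard) :
    rel s t := by
  rcases trichotomous_of rel s t with h1 | h1 | h1
  · exact h1
  · subst h1; exact absurd h (lt_irrefl _)
  · exact absurd (rank_lt_of_rel h1) (by omega)

lemma rank_lt_card (s : T) : {r | rel r s}.ncard < Fintype.card T := by
  have : {r | rel r s} ⊂ Set.univ := by
    refine ⟨Set.subset_univ _, fun hsub => irrefl_of rel s (hsub (Set.mem_univ s))⟩
  have := Set.ncard_lt_ncard this (Set.toFinite _)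
  simpa [Set.ncard_univ] using this

lemma card_rank_lt (a : ℕ) (ha : a ≤ Fintype.card T) :
    {s : T | {r | rel r s}.ncard < a}.ncard = a := by
  set f : T → Fin (Fintype.card T) := fun s => ⟨{r | rel r s}.ncard, rank_lt_card s⟩ with hf
  have hinj : Function.Injective f := by
    intro s u h
    have heq : {r | rel r s}.ncard = {r | rel r u}.ncard := congrArg Fin.val h
    rcases trichotomous_of rel s u with h1 | h1 | h1
    · exact absurd (rank_lt_of_rel h1) (by omega)
    · exact h1
    · exact absurd (rank_lt_of_rel h1) (by omega)
  have hbij : Function.Bijective f :=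
    (Fintype.bijective_iff_injective_and_card f).2 ⟨hinj, by simp⟩
  set e := Equiv.ofBijective f hbij with he
  have hval : ∀ s : T, ((e s : Fin (Fintype.card T)) : ℕ) = {r | rel r s}.ncard := by
    intro s; rfl
  have hset : {s : T | {r | rel r s}.ncard < a} = e.symm '' {i | (i : ℕ) < a} := by
    ext s
    simp only [Set.mem_setOf_eq, Set.mem_image]
    constructor
    · intro h
      exact ⟨e s, by rw [hval]; exact h, e.symm_apply_apply s⟩
    · rintro ⟨i, hi, rfl⟩
      rw [← hval, e.apply_symm_apply]; exact hi
  rw [hset, Set.ncard_image_of_injective _ e.symm.injective]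
  have hset2 : {i : Fin (Fintype.card T) | (i : ℕ) < a} =
      (Fin.castLE ha) '' Set.univ := by
    ext i
    simp only [Set.mem_setOf_eq, Set.image_univ, Set.mem_range]
    constructor
    · intro h; exact ⟨⟨i, h⟩, by ext; rfl⟩
    · rintro ⟨j, rfl⟩; exact j.isLt
  rw [hset2, Set.ncard_image_of_injective _ (Fin.castLE_injective ha), Set.ncard_univ]
  simp

end helpers

/-- Tanking cannot improve rank-based counts among qualified teams: if team t tanks and
qualifies both before and after, the number of qualified teams ranked above it cannot
decrease. -/
theorem stmt_5 {T : Type*} [Fintype T]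
    (rel rel' : T → T → Prop) [IsStrictTotalOrder T rel] [IsStrictTotalOrder T rel']
    (p q : ℕ) (hpq : 1 ≤ p ∧ p ≤ q ∧ q ≤ Fintype.card T)
    (Q Q' : Set T)
    (hQ : Q = {s | p - 1 ≤ {r | rel r s}.ncard ∧ {r | rel r s}.ncard ≤ q - 1})
    (hQ' : Q' = {s | p - 1 ≤ {r | rel' r s}.ncard ∧ {r | rel' r s}.ncard ≤ q - 1})
    (t : T) (htank : {r | rel r t} ⊆ {r | rel' r t})
    (htQ : t ∈ Q) (htQ' : t ∈ Q') :
    {s | s ∈ Q' ∧ rel' s t}.ncard ≥ {s | s ∈ Q ∧ rel s t}.ncard := by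
  obtain ⟨hp, hpq', hqc⟩ := hpq
  have key : ∀ (R : T → T → Prop) [IsStrictTotalOrder T R],
      p - 1 ≤ {r | R r t}.ncard → {r | R r t}.ncard ≤ q - 1 →
      {s | (p - 1 ≤ {r | R r s}.ncard ∧ {r | R r s}.ncard ≤ q - 1) ∧ R s t}.ncard
        = {r | R r t}.ncard - (p - 1) := by
    intro R _ htp htq
    have hsub : {s : T | {r | R r s}.ncard < p - 1} ⊆ {s | R s t} := by
      intro s hs
      exact rel_of_rank_lt (lt_of_lt_of_le hs htp)
    have hEq : {s | (p - 1 ≤ {r | R r s}.ncard ∧ {r | R r s}.ncard ≤ q - 1) ∧ R s t}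
        = {s | R s t} \ {s : T | {r | R r s}.ncard < p - 1} := by
      ext s
      simp only [Set.mem_setOf_eq, Set.mem_diff, not_lt]
      constructor
      · rintro ⟨⟨h1, _⟩, h3⟩; exact ⟨h3, h1⟩
      · rintro ⟨h3, h4⟩
        have := rank_lt_of_rel h3
        exact ⟨⟨h4, by omega⟩, h3⟩
    rw [hEq, Set.ncard_diff hsub (Set.toFinite _), card_rank_lt (p - 1) (by omega)]
  subst hQ hQ'
  obtain ⟨htp, htq⟩ := htQ
  obtain ⟨htp', htq'⟩ := htQ'
  have h1 := key rel htp htq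
  have h2 := key rel' htp' htq'
  simp only [Set.mem_setOf_eq]
  rw [h1, h2]
  have hle : {r | rel r t}.ncard ≤ {r | rel' r t}.ncard :=
    Set.ncard_le_ncard htank (Set.toFinite _)
  omega
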